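/- Soundness of the nested calculus ηLBI with respect to LBI: if the nested sequent Γ ⊢ φ is provable in ηLBI, then the bunched sequent β(Γ) ⊢ φ is provable in LBI. -/
import Mathlib


namespace BIPaper

/-- Formulas of BI: `φ ::= ⊤ | ⊥ | I | A | φ∧φ | φ∨φ | φ→φ | φ∗φ | φ−∗φ`. -/
inductive Formula : Type where
  | atom (a : ℕ)
  | top
  | bot
  | unit
  | and (φ ψ : Formula)
  | or (φ ψ : Formula)
  | imp (φ ψ : Formula)
  | star (φ ψ : Formula)
  | wand (φ ψ : Formula)
/-- Bunches: `Δ ::= φ | ∅₊ | ∅ₓ | (Δ;Δ) | (Δ,Δ)`. -/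
inductive Bunch : Type where
  | frm (φ : Formula)
  | eplus
  | etimes
  | semi (Δ₁ Δ₂ : Bunch)
  | comma (Δ₁ Δ₂ : Bunch)

/-- Bunched contexts `Δ(·)`: a bunch with a hole, used for sub-bunch replacement. -/
inductive BCtx : Type where
  | hole
  | semiL (C : BCtx) (Δ : Bunch)
  | semiR (Δ : Bunch) (C : BCtx)
  | commaL (C : BCtx) (Δ : Bunch)
  | commaR (Δ : Bunch) (C : BCtx)

/-- Filling the hole of a bunched context. -/
def BCtx.fill : BCtx → Bunch → Bunch
  | .hole, Δ => Δ
  | .semiL C Δ', Δ => .semi (C.fill Δ) Δ'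
  | .semiR Δ' C, Δ => .semi Δ' (C.fill Δ)
  | .commaL C Δ', Δ => .comma (C.fill Δ) Δ'
  | .commaR Δ' C, Δ => .comma Δ' (C.fill Δ)

/-- Coherent equivalence `≡` of bunches: least congruence making
`(; , ∅₊)` and `(, , ∅ₓ)` commutative monoids. -/
inductive BEquiv : Bunch → Bunch → Prop where
  | refl (Δ) : BEquiv Δ Δ
  | symm : BEquiv Δ Δ' → BEquiv Δ' Δ
  | trans : BEquiv Δ₁ Δ₂ → BEquiv Δ₂ Δ₃ → BEquiv Δ₁ Δ₃
  | semiComm (Δ₁ Δ₂) : BEquiv (.semi Δ₁ Δ₂) (.semi Δ₂ Δ₁)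
  | semiAssoc (Δ₁ Δ₂ Δ₃) : BEquiv (.semi (.semi Δ₁ Δ₂) Δ₃) (.semi Δ₁ (.semi Δ₂ Δ₃))
  | semiUnit (Δ) : BEquiv (.semi Δ .eplus) Δ
  | commaComm (Δ₁ Δ₂) : BEquiv (.comma Δ₁ Δ₂) (.comma Δ₂ Δ₁)
  | commaAssoc (Δ₁ Δ₂ Δ₃) : BEquiv (.comma (.comma Δ₁ Δ₂) Δ₃) (.comma Δ₁ (.comma Δ₂ Δ₃))
  | commaUnit (Δ) : BEquiv (.comma Δ .etimes) Δ
  | congr (C : BCtx) : BEquiv Δ Δ' → BEquiv (C.fill Δ) (C.fill Δ')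

/-- The bunched sequent calculus LBI.  `LBI b g Δ φ` means the sequent `Δ ⊢ φ`
is derivable, where the flag `b` permits the `cut` rule (so `LBI true true` is
full LBI and `LBI false true` is cut-free LBI), and the flag `g` permits the
general axiom `Ax : φ ⊢ φ` (the atomic axiom is always available; taking
`g := false` restricts `Ax` to propositional letters). -/
inductive LBI : Bool → Bool → Bunch → Formula → Prop where
  | ax (φ) : LBI b true (.frm φ) φ
  | axAtom (a : ℕ) : LBI b g (.frm (.atom a)) (.atom a)
  | exch : LBI b g Δ φ → BEquiv Δ Δ' → LBI b g Δ' φ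
  | weak (C : BCtx) (Δ'') : LBI b g (C.fill Δ') φ → LBI b g (C.fill (.semi Δ' Δ'')) φ
  | contr (C : BCtx) : LBI b g (C.fill (.semi Δ' Δ')) φ → LBI b g (C.fill Δ') φ
  | botL (C : BCtx) (φ) : LBI b g (C.fill (.frm .bot)) φ
  | topR : LBI b g .eplus .top
  | unitR : LBI b g .etimes .unit
  | unitL (C : BCtx) : LBI b g (C.fill .etimes) φ → LBI b g (C.fill (.frm .unit)) φ
  | andL (C : BCtx) : LBI b g (C.fill (.semi (.frm φ) (.frm ψ))) χ →
      LBI b g (C.fill (.frm (.and φ ψ))) χ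
  | andR : LBI b g Γ φ → LBI b g Δ ψ → LBI b g (.semi Γ Δ) (.and φ ψ)
  | orL (C : BCtx) : LBI b g (C.fill (.frm φ)) χ → LBI b g (C.fill (.frm ψ)) χ →
      LBI b g (C.fill (.frm (.or φ ψ))) χ
  | orR1 : LBI b g Δ φ → LBI b g Δ (.or φ ψ)
  | orR2 : LBI b g Δ ψ → LBI b g Δ (.or φ ψ)
  | impL (C : BCtx) : LBI b g Γ φ → LBI b g (C.fill (.frm ψ)) χ →
      LBI b g (C.fill (.semi Γ (.frm (.imp φ ψ)))) χ
  | impR : LBI b g (.semi Δ (.frm φ)) ψ → LBI b g Δ (.imp φ ψ)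
  | starL (C : BCtx) : LBI b g (C.fill (.comma (.frm φ) (.frm ψ))) χ →
      LBI b g (C.fill (.frm (.star φ ψ))) χ
  | starR : LBI b g Γ φ → LBI b g Δ ψ → LBI b g (.comma Γ Δ) (.star φ ψ)
  | wandL (C : BCtx) : LBI b g Γ φ → LBI b g (C.fill (.frm ψ)) χ →
      LBI b g (C.fill (.comma Γ (.frm (.wand φ ψ)))) χ
  | wandR : LBI b g (.comma Δ (.frm φ)) ψ → LBI b g Δ (.wand φ ψ)
  | cut (C : BCtx) : LBI true g Γ φ → LBI true g (C.fill (.frm φ)) χ →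
      LBI true g (C.fill Γ) χ
/-- Two-sorted nests (with leaves of type `α`), represented as finite-branching
trees whose `plus`/`times` nodes carry lists; lists are regarded as multisets
via the equivalence `NestEq` below, which plays the role of equality of
two-sorted nested multisets. -/
inductive Nest (α : Type) : Type where
  | frm (a : α)
  | plus (l : List (Nest α))
  | times (l : List (Nest α))

variable {α β : Type}

def Nest.flatP : Nest α → List (Nest α)
  | .plus l => l
  | x => [x]

def Nest.flatT : Nest α → List (Nest α)
  | .times l => l
  | x => [x]

/-- Smart additive multiset constructor: merges additive children into the
ambient additive multiset and promotes singletons. -/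
def nplus (l : List (Nest α)) : Nest α :=
  match l.flatMap Nest.flatP with
  | [x] => x
  | l' => .plus l'

/-- Smart multiplicative multiset constructor. -/
def ntimes (l : List (Nest α)) : Nest α :=
  match l.flatMap Nest.flatT with
  | [x] => x
  | l' => .times l'

/-- Nested contexts `Γ{·}`: a nest with a hole inside one of its multisets
(or at the root). -/
inductive NCtx (α : Type) : Type where
  | hole
  | plus (l : List (Nest α)) (C : NCtx α)
  | times (l : List (Nest α)) (C : NCtx α)

/-- Filling the hole of a nested context (with the implicit merging and
promotion in the syntax tree). -/
def NCtx.fill : NCtx α → Nest α → Nest α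
  | .hole, x => x
  | .plus l C, x => nplus (C.fill x :: l)
  | .times l C, x => ntimes (C.fill x :: l)

mutual
/-- Equality of nests qua nested multisets: the lists in the two nests agree
up to permutation, recursively. -/
inductive NestEq : Nest α → Nest α → Prop where
  | frm (a : α) : NestEq (.frm a) (.frm a)
  | plus : NListPerm l l' → NestEq (.plus l) (.plus l')
  | times : NListPerm l l' → NestEq (.times l) (.times l')

inductive NListPerm : List (Nest α) → List (Nest α) → Prop where
  | nil : NListPerm [] []
  | cons : NestEq x y → NListPerm l l' → NListPerm (x :: l) (y :: l')
  | swap : NestEq x x' → NestEq y y' → NListPerm l l' →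
      NListPerm (x :: y :: l) (y' :: x' :: l')
  | trans : NListPerm l₁ l₂ → NListPerm l₂ l₃ → NListPerm l₁ l₃
end

/-- All leaves of a nest satisfy `p`. -/
inductive Nest.All (p : α → Prop) : Nest α → Prop where
  | frm : p a → Nest.All p (.frm a)
  | plus : (∀ x ∈ l, Nest.All p x) → Nest.All p (.plus l)
  | times : (∀ x ∈ l, Nest.All p x) → Nest.All p (.times l)

def Nest.notPlusRoot : Nest α → Prop
  | .plus _ => False
  | _ => True

def Nest.notTimesRoot : Nest α → Prop
  | .times _ => False
  | _ => True

/-- Well-formedness of a nest according to the two-sorted grammar: multisets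
are never singletons, and additive (resp. multiplicative) multisets contain
only formulas and multiplicative (resp. additive) nests. -/
inductive Nest.WF : Nest α → Prop where
  | frm (a : α) : Nest.WF (.frm a)
  | plus : l.length ≠ 1 → (∀ x ∈ l, Nest.WF x) → (∀ x ∈ l, Nest.notPlusRoot x) →
      Nest.WF (.plus l)
  | times : l.length ≠ 1 → (∀ x ∈ l, Nest.WF x) → (∀ x ∈ l, Nest.notTimesRoot x) →
      Nest.WF (.times l)

mutual
/-- Leafwise map of nests. -/
def Nest.map (f : α → β) : Nest α → Nest β
  | .frm a => .frm (f a)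
  | .plus l => .plus (Nest.mapList f l)
  | .times l => .times (Nest.mapList f l)

def Nest.mapList (f : α → β) : List (Nest α) → List (Nest β)
  | [] => []
  | x :: xs => Nest.map f x :: Nest.mapList f xs
end
mutual
/-- The top-level additive components of the nestification of a bunch. -/
def addParts : Bunch → List (Nest Formula)
  | .frm φ => [.frm φ]
  | .eplus => []
  | .etimes => [.times []]
  | .semi Δ₁ Δ₂ => addParts Δ₁ ++ addParts Δ₂
  | .comma Δ₁ Δ₂ => [ntimes (mulParts Δ₁ ++ mulParts Δ₂)]

/-- The top-level multiplicative components of the nestification of a bunch. -/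
def mulParts : Bunch → List (Nest Formula)
  | .frm φ => [.frm φ]
  | .etimes => []
  | .eplus => [.plus []]
  | .comma Δ₁ Δ₂ => mulParts Δ₁ ++ mulParts Δ₂
  | .semi Δ₁ Δ₂ => [nplus (addParts Δ₁ ++ addParts Δ₂)]
end

/-- The nestifying translation `η : B → N`. -/
def eta : Bunch → Nest Formula
  | .frm φ => .frm φ
  | .eplus => .plus []
  | .etimes => .times []
  | .semi Δ₁ Δ₂ => nplus (addParts Δ₁ ++ addParts Δ₂)
  | .comma Δ₁ Δ₂ => ntimes (mulParts Δ₁ ++ mulParts Δ₂)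

mutual
/-- The bunching translation `β : N → B`. -/
def beta : Nest Formula → Bunch
  | .frm φ => .frm φ
  | .plus l => betaP l
  | .times l => betaT l

def betaP : List (Nest Formula) → Bunch
  | [] => .eplus
  | [x] => beta x
  | x :: xs => .semi (beta x) (betaP xs)

def betaT : List (Nest Formula) → Bunch
  | [] => .etimes
  | [x] => beta x
  | x :: xs => .comma (beta x) (betaT xs)
end
/-- The nested sequent calculus ηLBI (system `ηLBI`, Figure 2): the rules of
LBI transcribed to two-sorted nests, with exchange absorbed by the multiset
structure (here: the explicit `exch` rule for the list representation of
multisets), weakening deleted, and the weakening-absorbing rules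
`Ax'`, `I'`, `⊤'`, `∗'R`, `−∗'L` added (retaining `Ax`, `∗R`, `−∗L`, `IR`,
`⊤R`); there is no cut rule. -/
inductive NProof : Nest Formula → Formula → Prop where
  | ax (φ) : NProof (.frm φ) φ
  | axP (a : ℕ) (l : List (Nest Formula)) :
      NProof (nplus (.frm (.atom a) :: l)) (.atom a)
  | exch : NProof Γ φ → NestEq Γ Γ' → NProof Γ' φ
  | contr (C : NCtx Formula) : NProof (C.fill (nplus [Γ', Γ'])) φ →
      NProof (C.fill Γ') φ
  | botL (C : NCtx Formula) (φ) : NProof (C.fill (.frm .bot)) φ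
  | topR : NProof (.plus []) .top
  | topW (Γ : Nest Formula) : NProof Γ .top
  | unitR : NProof (.times []) .unit
  | unitW (l : List (Nest Formula)) : NProof (nplus (.times [] :: l)) .unit
  | unitL (C : NCtx Formula) : NProof (C.fill (.times [])) φ →
      NProof (C.fill (.frm .unit)) φ
  | andL (C : NCtx Formula) : NProof (C.fill (nplus [.frm φ, .frm ψ])) χ →
      NProof (C.fill (.frm (.and φ ψ))) χ
  | andR : NProof Γ φ → NProof Δ ψ → NProof (nplus [Γ, Δ]) (.and φ ψ)
  | orL (C : NCtx Formula) : NProof (C.fill (.frm φ)) χ → NProof (C.fill (.frm ψ)) χ →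
      NProof (C.fill (.frm (.or φ ψ))) χ
  | orR1 : NProof Γ φ → NProof Γ (.or φ ψ)
  | orR2 : NProof Γ ψ → NProof Γ (.or φ ψ)
  | impL (C : NCtx Formula) : NProof Δ φ → NProof (C.fill (.frm ψ)) χ →
      NProof (C.fill (nplus [Δ, .frm (.imp φ ψ)])) χ
  | impR : NProof (nplus [Γ, .frm φ]) ψ → NProof Γ (.imp φ ψ)
  | starL (C : NCtx Formula) : NProof (C.fill (ntimes [.frm φ, .frm ψ])) χ →
      NProof (C.fill (.frm (.star φ ψ))) χ
  | starR : NProof Γ φ → NProof Δ ψ → NProof (ntimes [Γ, Δ]) (.star φ ψ)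
  | starR' (l : List (Nest Formula)) : NProof Γ φ → NProof Δ ψ →
      NProof (nplus (ntimes [Γ, Δ] :: l)) (.star φ ψ)
  | wandL (C : NCtx Formula) : NProof Δ φ → NProof (C.fill (.frm ψ)) χ →
      NProof (C.fill (ntimes [Δ, .frm (.wand φ ψ)])) χ
  | wandL' (C : NCtx Formula) : NProof Δ' φ →
      NProof (C.fill (ntimes [Δ'', .frm ψ])) χ →
      NProof (C.fill (ntimes [Δ', Δ'', nplus [Δ''', .frm (.wand φ ψ)]])) χ
  | wandR : NProof (ntimes [Γ, .frm φ]) ψ → NProof Γ (.wand φ ψ)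

/-! ### Auxiliary lemmas for soundness -/

namespace BEquiv

theorem semiCongr (h1 : BEquiv a a') (h2 : BEquiv b b') :
    BEquiv (.semi a b) (.semi a' b') :=
  (BEquiv.congr (.semiL .hole b) h1).trans (BEquiv.congr (.semiR a' .hole) h2)

theorem commaCongr (h1 : BEquiv a a') (h2 : BEquiv b b') :
    BEquiv (.comma a b) (.comma a' b') :=
  (BEquiv.congr (.commaL .hole b) h1).trans (BEquiv.congr (.commaR a' .hole) h2)

theorem semiLeftComm (a b c : Bunch) :
    BEquiv (.semi a (.semi b c)) (.semi b (.semi a c)) :=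
  ((BEquiv.semiAssoc a b c).symm.trans
    (semiCongr (BEquiv.semiComm a b) (BEquiv.refl c))).trans (BEquiv.semiAssoc b a c)

theorem commaLeftComm (a b c : Bunch) :
    BEquiv (.comma a (.comma b c)) (.comma b (.comma a c)) :=
  ((BEquiv.commaAssoc a b c).symm.trans
    (commaCongr (BEquiv.commaComm a b) (BEquiv.refl c))).trans (BEquiv.commaAssoc b a c)

theorem semiUnitL (a : Bunch) : BEquiv (.semi .eplus a) a :=
  (BEquiv.semiComm _ _).trans (BEquiv.semiUnit a)

end BEquiv

theorem betaP_cons (x : Nest Formula) (l : List (Nest Formula)) :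
    BEquiv (betaP (x :: l)) (.semi (beta x) (betaP l)) := by
  cases l with
  | nil => exact (BEquiv.semiUnit (beta x)).symm
  | cons y ys => simp [betaP]; exact BEquiv.refl _

theorem betaT_cons (x : Nest Formula) (l : List (Nest Formula)) :
    BEquiv (betaT (x :: l)) (.comma (beta x) (betaT l)) := by
  cases l with
  | nil => exact (BEquiv.commaUnit (beta x)).symm
  | cons y ys => simp [betaT]; exact BEquiv.refl _

theorem betaP_append (l1 l2 : List (Nest Formula)) :
    BEquiv (betaP (l1 ++ l2)) (.semi (betaP l1) (betaP l2)) := by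
  induction l1 with
  | nil => exact (BEquiv.semiUnitL _).symm
  | cons a t ih =>
      refine ((betaP_cons a (t ++ l2)).trans ?_).trans
        (BEquiv.semiCongr (betaP_cons a t).symm (BEquiv.refl _))
      exact (BEquiv.semiCongr (BEquiv.refl _) ih).trans (BEquiv.semiAssoc _ _ _).symm

theorem betaT_append (l1 l2 : List (Nest Formula)) :
    BEquiv (betaT (l1 ++ l2)) (.comma (betaT l1) (betaT l2)) := by
  induction l1 with
  | nil => exact ((BEquiv.commaComm _ _).trans (BEquiv.commaUnit _)).symm
  | cons a t ih =>
      refine ((betaT_cons a (t ++ l2)).trans ?_).trans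
        (BEquiv.commaCongr (betaT_cons a t).symm (BEquiv.refl _))
      exact (BEquiv.commaCongr (BEquiv.refl _) ih).trans (BEquiv.commaAssoc _ _ _).symm

theorem betaP_flatP (x : Nest Formula) : betaP x.flatP = beta x := by
  cases x <;> simp [Nest.flatP, betaP, beta]

theorem betaT_flatT (x : Nest Formula) : betaT x.flatT = beta x := by
  cases x <;> simp [Nest.flatT, betaT, beta]

theorem betaP_flatMap (l : List (Nest Formula)) :
    BEquiv (betaP (l.flatMap Nest.flatP)) (betaP l) := by
  induction l with
  | nil => exact BEquiv.refl _
  | cons a t ih =>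
      refine ((betaP_append _ _).trans ?_).trans (betaP_cons a t).symm
      exact BEquiv.semiCongr (betaP_flatP a ▸ BEquiv.refl _) ih

theorem betaT_flatMap (l : List (Nest Formula)) :
    BEquiv (betaT (l.flatMap Nest.flatT)) (betaT l) := by
  induction l with
  | nil => exact BEquiv.refl _
  | cons a t ih =>
      refine ((betaT_append _ _).trans ?_).trans (betaT_cons a t).symm
      exact BEquiv.commaCongr (betaT_flatT a ▸ BEquiv.refl _) ih

theorem beta_nplus (l : List (Nest Formula)) :
    BEquiv (beta (nplus l)) (betaP l) := by
  have : beta (nplus l) = betaP (l.flatMap Nest.flatP) := by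
    unfold nplus
    rcases h : l.flatMap Nest.flatP with _ | ⟨x, _ | ⟨y, t⟩⟩ <;> simp [beta, betaP]
  exact this ▸ betaP_flatMap l

theorem beta_ntimes (l : List (Nest Formula)) :
    BEquiv (beta (ntimes l)) (betaT l) := by
  have : beta (ntimes l) = betaT (l.flatMap Nest.flatT) := by
    unfold ntimes
    rcases h : l.flatMap Nest.flatT with _ | ⟨x, _ | ⟨y, t⟩⟩ <;> simp [beta, betaT]
  exact this ▸ betaT_flatMap l
theorem nestEq_beta {x y : Nest Formula} (h : NestEq x y) :
    BEquiv (beta x) (beta y) := by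
  induction h using NestEq.rec
    (motive_2 := fun l l' _ => BEquiv (betaP l) (betaP l') ∧ BEquiv (betaT l) (betaT l')) with
  | frm a => exact BEquiv.refl _
  | plus hp ih => simp only [beta]; exact ih.1
  | times hp ih => simp only [beta]; exact ih.2
  | nil => exact ⟨BEquiv.refl _, BEquiv.refl _⟩
  | cons hxy hll hb ih =>
      constructor
      · exact ((betaP_cons _ _).trans (BEquiv.semiCongr hb ih.1)).trans (betaP_cons _ _).symm
      · exact ((betaT_cons _ _).trans (BEquiv.commaCongr hb ih.2)).trans (betaT_cons _ _).symm
  | swap hx hy hll hbx hby ih =>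
      constructor
      · refine ((betaP_cons _ _).trans ((BEquiv.semiCongr (BEquiv.refl _) (betaP_cons _ _)).trans ?_)).trans (betaP_cons _ _).symm
        refine (BEquiv.semiLeftComm _ _ _).trans ?_
        exact BEquiv.semiCongr hby ((BEquiv.semiCongr hbx ih.1).trans (betaP_cons _ _).symm)
      · refine ((betaT_cons _ _).trans ((BEquiv.commaCongr (BEquiv.refl _) (betaT_cons _ _)).trans ?_)).trans (betaT_cons _ _).symm
        refine (BEquiv.commaLeftComm _ _ _).trans ?_
        exact BEquiv.commaCongr hby ((BEquiv.commaCongr hbx ih.2).trans (betaT_cons _ _).symm)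
  | trans h1 h2 ih1 ih2 =>
      exact ⟨ih1.1.trans ih2.1, ih1.2.trans ih2.2⟩
/-- Translation of nested contexts to bunched contexts. -/
def toB : NCtx Formula → BCtx
  | .hole => .hole
  | .plus l C => .semiL (toB C) (betaP l)
  | .times l C => .commaL (toB C) (betaT l)

theorem toB_fill (C : NCtx Formula) (x : Nest Formula) :
    BEquiv (beta (C.fill x)) ((toB C).fill (beta x)) := by
  induction C with
  | hole => exact BEquiv.refl _
  | plus l C ih =>
      exact ((beta_nplus _).trans (betaP_cons _ _)).trans
        (BEquiv.semiCongr ih (BEquiv.refl _))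
  | times l C ih =>
      exact ((beta_ntimes _).trans (betaT_cons _ _)).trans
        (BEquiv.commaCongr ih (BEquiv.refl _))

/-- Composition of bunched contexts. -/
def BCtx.comp : BCtx → BCtx → BCtx
  | .hole, D => D
  | .semiL C Δ, D => .semiL (C.comp D) Δ
  | .semiR Δ C, D => .semiR Δ (C.comp D)
  | .commaL C Δ, D => .commaL (C.comp D) Δ
  | .commaR Δ C, D => .commaR Δ (C.comp D)

theorem BCtx.comp_fill (C D : BCtx) (Δ : Bunch) :
    (C.comp D).fill Δ = C.fill (D.fill Δ) := by
  induction C <;> simp [BCtx.comp, BCtx.fill, *]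

theorem LBI.exch' (h : LBI b g Δ φ) (e : BEquiv Δ' Δ) : LBI b g Δ' φ :=
  h.exch e.symm
@[simp] theorem beta_frm (φ : Formula) : beta (.frm φ) = .frm φ := by simp [beta]
@[simp] theorem beta_plusNil : beta (Nest.plus ([] : List (Nest Formula))) = .eplus := by
  simp [beta, betaP]
@[simp] theorem beta_timesNil : beta (Nest.times ([] : List (Nest Formula))) = .etimes := by
  simp [beta, betaT]

theorem beta_nplus2 (a b : Nest Formula) :
    BEquiv (beta (nplus [a, b])) (.semi (beta a) (beta b)) := by
  simpa [betaP] using beta_nplus [a, b]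

theorem beta_ntimes2 (a b : Nest Formula) :
    BEquiv (beta (ntimes [a, b])) (.comma (beta a) (beta b)) := by
  simpa [betaT] using beta_ntimes [a, b]

theorem beta_ntimes3 (a b c : Nest Formula) :
    BEquiv (beta (ntimes [a, b, c])) (.comma (beta a) (.comma (beta b) (beta c))) := by
  simpa [betaT] using beta_ntimes [a, b, c]

theorem toB_fill_frm (C : NCtx Formula) (ψ : Formula) :
    BEquiv (beta (C.fill (.frm ψ))) ((toB C).fill (.frm ψ)) := by
  simpa using toB_fill C (.frm ψ)

theorem beta_nplus_frm2 (φ ψ : Formula) :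
    BEquiv (beta (nplus [.frm φ, .frm ψ])) (.semi (.frm φ) (.frm ψ)) := by
  simpa using beta_nplus2 (.frm φ) (.frm ψ)

theorem beta_ntimes_frm2 (φ ψ : Formula) :
    BEquiv (beta (ntimes [.frm φ, .frm ψ])) (.comma (.frm φ) (.frm ψ)) := by
  simpa using beta_ntimes2 (.frm φ) (.frm ψ)

theorem beta_nplus_mixR (x : Nest Formula) (ψ : Formula) :
    BEquiv (beta (nplus [x, .frm ψ])) (.semi (beta x) (.frm ψ)) := by
  simpa using beta_nplus2 x (.frm ψ)

theorem beta_ntimes_mixR (x : Nest Formula) (ψ : Formula) :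
    BEquiv (beta (ntimes [x, .frm ψ])) (.comma (beta x) (.frm ψ)) := by
  simpa using beta_ntimes2 x (.frm ψ)
/-- **Soundness of ηLBI (Lemma 8)**: if the nested sequent `Γ ⊢ φ` is provable
in ηLBI then the bunched sequent `β(Γ) ⊢ φ` is provable in LBI. -/
theorem etaLBI_sound (Γ : Nest Formula) (φ : Formula) :
    NProof Γ φ → LBI true true (beta Γ) φ := by
  intro h
  induction h with
  | ax φ => rw [beta_frm]; exact LBI.ax φ
  | axP a l =>
      refine (LBI.weak .hole (betaP l) (LBI.axAtom a)).exch' ?_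
      refine (beta_nplus _).trans ((betaP_cons _ _).trans ?_)
      rw [beta_frm]; exact BEquiv.refl _
  | exch h e ih => exact ih.exch (nestEq_beta e)
  | contr C h ih =>
      refine LBI.exch' (LBI.contr (toB C) ?_) (toB_fill C _)
      exact ih.exch ((toB_fill C _).trans (BEquiv.congr _ (beta_nplus2 _ _)))
  | botL C φ => exact LBI.exch' (LBI.botL (toB C) φ) (toB_fill_frm C _)
  | topR => rw [beta_plusNil]; exact LBI.topR
  | topW Γ =>
      exact (LBI.weak (b := true) (g := true) .hole (beta Γ) LBI.topR).exch
        (BEquiv.semiUnitL _)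
  | unitR => rw [beta_timesNil]; exact LBI.unitR
  | unitW l =>
      refine (LBI.weak (b := true) (g := true) .hole (betaP l) LBI.unitR).exch' ?_
      refine (beta_nplus _).trans ((betaP_cons _ _).trans ?_)
      rw [beta_timesNil]; exact BEquiv.refl _
  | unitL C h ih =>
      refine LBI.exch' (LBI.unitL (toB C) ?_) (toB_fill_frm C _)
      exact ih.exch (by simpa using toB_fill C (.times []))
  | andL C h ih =>
      refine LBI.exch' (LBI.andL (toB C) ?_) (toB_fill_frm C _)
      exact ih.exch ((toB_fill C _).trans (BEquiv.congr _ (beta_nplus_frm2 _ _)))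
  | andR h1 h2 ih1 ih2 => exact (LBI.andR ih1 ih2).exch' (beta_nplus2 _ _)
  | orL C h1 h2 ih1 ih2 =>
      refine LBI.exch' (LBI.orL (toB C) ?_ ?_) (toB_fill_frm C _)
      · exact ih1.exch (toB_fill_frm C _)
      · exact ih2.exch (toB_fill_frm C _)
  | orR1 h ih => exact LBI.orR1 ih
  | orR2 h ih => exact LBI.orR2 ih
  | impL C h1 h2 ih1 ih2 =>
      refine LBI.exch' (LBI.impL (toB C) ih1 (ih2.exch (toB_fill_frm C _))) ?_
      exact (toB_fill C _).trans (BEquiv.congr _ (beta_nplus_mixR _ _))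
  | impR h ih => exact LBI.impR (ih.exch (beta_nplus_mixR _ _))
  | starL C h ih =>
      refine LBI.exch' (LBI.starL (toB C) ?_) (toB_fill_frm C _)
      exact ih.exch ((toB_fill C _).trans (BEquiv.congr _ (beta_ntimes_frm2 _ _)))
  | starR h1 h2 ih1 ih2 => exact (LBI.starR ih1 ih2).exch' (beta_ntimes2 _ _)
  | starR' l h1 h2 ih1 ih2 =>
      refine (LBI.weak .hole (betaP l) (LBI.starR ih1 ih2)).exch' ?_
      exact (beta_nplus _).trans ((betaP_cons _ _).trans
        (BEquiv.semiCongr (beta_ntimes2 _ _) (BEquiv.refl _)))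
  | wandL C h1 h2 ih1 ih2 =>
      refine LBI.exch' (LBI.wandL (toB C) ih1 (ih2.exch (toB_fill_frm C _))) ?_
      exact (toB_fill C _).trans (BEquiv.congr _ (beta_ntimes_mixR _ _))
  | wandR h ih => exact LBI.wandR (ih.exch (beta_ntimes_mixR _ _))
  | @wandL' Δ' φ' Δ'' ψ' χ' Δ''' C h1 h2 ih1 ih2 =>
      have ih2' : LBI true true
          (((toB C).comp (.commaR (beta Δ'') .hole)).fill (.frm ψ')) χ' := by
        rw [BCtx.comp_fill]
        exact ih2.exch ((toB_fill C _).trans (BEquiv.congr _ (beta_ntimes_mixR _ _)))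
      have step := LBI.wandL ((toB C).comp (.commaR (beta Δ'') .hole)) ih1 ih2'
      rw [BCtx.comp_fill] at step
      have step2 := LBI.weak
        ((toB C).comp (.commaR (beta Δ'') (.commaR (beta Δ') .hole))) (beta Δ''')
        (by rw [BCtx.comp_fill]; exact step)
      rw [BCtx.comp_fill] at step2
      refine step2.exch' ?_
      refine (toB_fill C _).trans ?_
      refine (BEquiv.congr _ ((beta_ntimes3 _ _ _).trans
        (BEquiv.commaCongr (BEquiv.refl _)
          (BEquiv.commaCongr (BEquiv.refl _) (beta_nplus_mixR _ _))))).trans ?_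
      refine (BEquiv.congr (toB C) ?_)
      exact (BEquiv.commaLeftComm _ _ _).trans
        (BEquiv.commaCongr (BEquiv.refl _)
          (BEquiv.commaCongr (BEquiv.refl _) (BEquiv.semiComm _ _)))

end BIPaper
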